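/- arXiv:1405.5333 — 3 statements merged into one kernel-verified Lean document; each statement's English description precedes it below -/
import Mathlib

section
/- For θ > 0 and μ ∈ ℝ, the function u(x) = e^{x(√(μ²+2θ)−μ)}·(θ·e^{−2(x−a)√(μ²+2θ)} + μ² + θ + μ√(μ²+2θ)) satisfies μ·u′(x) + (1/2)·u″(x) = θ·u(x) for all x, and u′(a) = 0. -/
/-!
With `g = √(μ² + 2θ)`, expanding the product writes `u` as
`θ e^{2ag} e^{x(-g-μ)} + (μ² + θ + μg) e^{x(g-μ)}`, and `-g - μ`, `g - μ` are the two roots of the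
characteristic equation `μk + k²/2 = θ`, so `u` solves the ODE. At `x = a` both exponentials
equal `e^{a(g-μ)}`, and the weighted roots cancel: `θ(-g-μ) + (μ² + θ + μg)(g-μ) = 0`.
-/

open Real

noncomputable def expCombination (c₁ k₁ c₂ k₂ : ℝ) (x : ℝ) : ℝ :=
  c₁ * exp (x * k₁) + c₂ * exp (x * k₂)

lemma deriv_expCombination (c₁ k₁ c₂ k₂ : ℝ) :
    deriv (expCombination c₁ k₁ c₂ k₂) = expCombination (c₁ * k₁) k₁ (c₂ * k₂) k₂ := by
  funext x
  have hexp (c k : ℝ) : HasDerivAt (fun x => c * exp (x * k)) (c * k * exp (x * k)) x := by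
    simpa [mul_comm, mul_left_comm, mul_assoc] using
      (((hasDerivAt_id x).const_mul k).exp).const_mul c
  exact ((hexp c₁ k₁).add (hexp c₂ k₂)).deriv

lemma expCombination_ode {μ θ k₁ k₂ : ℝ} (h₁ : μ * k₁ + k₁ ^ 2 / 2 = θ)
    (h₂ : μ * k₂ + k₂ ^ 2 / 2 = θ) (c₁ c₂ x : ℝ) :
    μ * deriv (expCombination c₁ k₁ c₂ k₂) x
      + 1 / 2 * deriv (deriv (expCombination c₁ k₁ c₂ k₂)) x
      = θ * expCombination c₁ k₁ c₂ k₂ x := by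
  simp only [deriv_expCombination, expCombination]
  linear_combination c₁ * exp (x * k₁) * h₁ + c₂ * exp (x * k₂) * h₂

lemma characteristic_roots_of_sq_eq {μ θ g : ℝ} (hg : g ^ 2 = μ ^ 2 + 2 * θ) :
    μ * (-g - μ) + (-g - μ) ^ 2 / 2 = θ ∧ μ * (g - μ) + (g - μ) ^ 2 / 2 = θ :=
  ⟨by linear_combination hg / 2, by linear_combination hg / 2⟩

theorem drifted_laplace_ode (a μ θ : ℝ) (hθ : 0 < θ)
    (u : ℝ → ℝ)
    (hu : u = fun x => Real.exp (x * (Real.sqrt (μ ^ 2 + 2 * θ) - μ)) *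
      (θ * Real.exp (-2 * (x - a) * Real.sqrt (μ ^ 2 + 2 * θ)) + μ ^ 2 + θ + μ * Real.sqrt (μ ^ 2 + 2 * θ))) :
    (∀ x : ℝ, μ * deriv u x + (1 / 2) * deriv (deriv u) x = θ * u x) ∧ deriv u a = 0 := by
  set g := √(μ ^ 2 + 2 * θ)
  have hg : g ^ 2 = μ ^ 2 + 2 * θ := sq_sqrt (by positivity)
  have hu' : u = expCombination (θ * exp (2 * a * g)) (-g - μ) (μ ^ 2 + θ + μ * g) (g - μ) := by
    funext x
    have hexp : exp (x * (g - μ)) * exp (-2 * (x - a) * g)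
        = exp (2 * a * g) * exp (x * (-g - μ)) := by
      rw [← exp_add, ← exp_add]; ring_nf
    rw [hu, expCombination]
    linear_combination θ * hexp
  obtain ⟨hroot₁, hroot₂⟩ := characteristic_roots_of_sq_eq hg
  refine ⟨fun x => hu' ▸ expCombination_ode hroot₁ hroot₂ _ _ x, ?_⟩
  have hexp : exp (2 * a * g) * exp (a * (-g - μ)) = exp (a * (g - μ)) := by
    rw [← exp_add]; ring_nf
  rw [hu', deriv_expCombination, expCombination]
  linear_combination θ * (-g - μ) * hexp + exp (a * (g - μ)) * μ * hg
end

section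
/- Let a < S and let g be an integrable density on [a,S] symmetric about (a+S)/2, with bilateral Laplace transform ĝ(θ) = ∫_a^S e^{−θx}g(x)dx. If f̂(θ) = (ĝ(√(2θ)) + ĝ(−√(2θ))·e^{−2a√(2θ)})/(e^{−S√(2θ)} + e^{(S−2a)√(2θ)}) for θ ≥ 0, then ĝ(θ) = ((e^{−Sθ} + e^{−(2a−S)θ})/(1 + e^{(S−a)θ}))·f̂(θ²/2) for all θ ≥ 0. -/
/-! The symmetry of `g` about `(a + S) / 2` gives `ĝ(-θ) = exp ((a + S) θ) ĝ(θ)`; substituting this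
into the formula for `f̂(θ² / 2)` makes the numerator `ĝ(θ) (1 + exp ((S - a) θ))`, and solving for
`ĝ(θ)` is the claimed inversion. -/

open Real MeasureTheory intervalIntegral

theorem integral_exp_mul_of_symmetric {g : ℝ → ℝ} {a b : ℝ} (hsymm : ∀ x, g (a + b - x) = g x)
    (θ : ℝ) :
    ∫ x in a..b, exp (θ * x) * g x = exp ((a + b) * θ) * ∫ x in a..b, exp (-θ * x) * g x := by
  have hreflect : ∫ x in a..b, exp (θ * x) * g x
      = ∫ x in a..b, exp (θ * (a + b - x)) * g (a + b - x) := by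
    rw [integral_comp_sub_left (fun x => exp (θ * x) * g x) (a + b)]
    simp only [add_sub_cancel_left, add_sub_cancel_right]
  rw [hreflect, ← intervalIntegral.integral_const_mul]
  refine integral_congr fun x _ => ?_
  rw [hsymm x, ← mul_assoc, ← exp_add]
  ring_nf

theorem ifpt_symmetric_inversion_general (a S : ℝ) (g : ℝ → ℝ) (fhat : ℝ → ℝ)
    (hsymm : ∀ x, g (a + S - x) = g x)
    (ghat : ℝ → ℝ) (hghat : ghat = fun θ => ∫ x in a..S, Real.exp (-θ * x) * g x)
    (hf : ∀ θ : ℝ, 0 ≤ θ →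
      fhat θ = (ghat (Real.sqrt (2 * θ)) + ghat (-Real.sqrt (2 * θ)) * Real.exp (-2 * a * Real.sqrt (2 * θ))) /
        (Real.exp (-S * Real.sqrt (2 * θ)) + Real.exp ((S - 2 * a) * Real.sqrt (2 * θ)))) :
    ∀ θ : ℝ, 0 ≤ θ →
      ghat θ = ((Real.exp (-S * θ) + Real.exp (-(2 * a - S) * θ)) / (1 + Real.exp ((S - a) * θ))) *
        fhat (θ ^ 2 / 2) := by
  intro θ hθ
  have hsqrt : √(2 * (θ ^ 2 / 2)) = θ := by
    rw [show 2 * (θ ^ 2 / 2) = θ ^ 2 by ring, sqrt_sq hθ]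
  have hreflect : ghat (-θ) = exp ((a + S) * θ) * ghat θ := by
    simpa only [hghat, neg_neg] using integral_exp_mul_of_symmetric hsymm θ
  have hnum : ghat θ + exp ((a + S) * θ) * ghat θ * exp (-2 * a * θ)
      = ghat θ * (1 + exp ((S - a) * θ)) := by
    have hexp : exp ((a + S) * θ) * exp (-2 * a * θ) = exp ((S - a) * θ) := by
      rw [← exp_add]; ring_nf
    rw [← hexp]; ring
  have hden_f : exp (-S * θ) + exp ((S - 2 * a) * θ) ≠ 0 := by positivity
  have hden_g : 1 + exp ((S - a) * θ) ≠ 0 := by positivity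
  rw [hf _ (by positivity), hsqrt, hreflect, hnum, show -(2 * a - S) * θ = (S - 2 * a) * θ by ring]
  field_simp

theorem ifpt_symmetric_inversion (a S : ℝ) (ha : a < S) (g : ℝ → ℝ) (fhat : ℝ → ℝ)
    (hmeas : Measurable g) (hint : Integrable g)
    (hnn : ∀ x, 0 ≤ g x)
    (hsupp : ∀ x, x ∉ Set.Icc a S → g x = 0)
    (hsymm : ∀ x, g (a + S - x) = g x)
    (ghat : ℝ → ℝ) (hghat : ghat = fun θ => ∫ x in a..S, Real.exp (-θ * x) * g x)
    (hf : ∀ θ : ℝ, 0 ≤ θ →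
      fhat θ = (ghat (Real.sqrt (2 * θ)) + ghat (-Real.sqrt (2 * θ)) * Real.exp (-2 * a * Real.sqrt (2 * θ))) /
        (Real.exp (-S * Real.sqrt (2 * θ)) + Real.exp ((S - 2 * a) * Real.sqrt (2 * θ)))) :
    ∀ θ : ℝ, 0 ≤ θ →
      ghat θ = ((Real.exp (-S * θ) + Real.exp (-(2 * a - S) * θ)) / (1 + Real.exp ((S - a) * θ))) *
        fhat (θ ^ 2 / 2) :=
  ifpt_symmetric_inversion_general a S g fhat hsymm ghat hghat hf
end

section
/- For a < S and θ > 0, the Laplace transform of the uniform density on (a,S), ĝ(θ) = (e^{−aθ} − e^{−Sθ})/((S−a)θ), satisfies (ĝ(√(2θ)) + ĝ(−√(2θ))·e^{−2a√(2θ)})/(e^{−S√(2θ)} + e^{(S−2a)√(2θ)}) = tanh((S−a)√(2θ))/((S−a)√(2θ)). -/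
/-!
Factoring `exp (-a u)` out of numerator and denominator leaves `2 sinh ((S - a) u) / ((S - a) u)`
over `2 cosh ((S - a) u)`, whose ratio is `tanh ((S - a) u) / ((S - a) u)`.
-/

open Real

noncomputable def uniformLaplace (a S u : ℝ) : ℝ :=
  (exp (-a * u) - exp (-S * u)) / ((S - a) * u)

theorem uniformLaplace_add_uniformLaplace_neg_mul_exp (a S u : ℝ) :
    uniformLaplace a S u + uniformLaplace a S (-u) * exp (-2 * a * u) =
      exp (-a * u) * (2 * sinh ((S - a) * u)) / ((S - a) * u) := by
  have numerator : exp (-a * u) - exp (-S * u) - (exp (-a * -u) - exp (-S * -u)) * exp (-2 * a * u) =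
      exp (-a * u) * (2 * sinh ((S - a) * u)) := by
    rw [sinh_eq, mul_div_cancel₀ _ (two_ne_zero' ℝ)]
    simp only [sub_mul, mul_sub, ← exp_add]
    ring_nf
  rw [← numerator, uniformLaplace, uniformLaplace, mul_neg (S - a) u, div_neg]
  ring

theorem exp_neg_mul_add_exp_sub_two_mul (a S u : ℝ) :
    exp (-S * u) + exp ((S - 2 * a) * u) = exp (-a * u) * (2 * cosh ((S - a) * u)) := by
  rw [cosh_eq, mul_div_cancel₀ _ (two_ne_zero' ℝ), mul_add, ← exp_add, ← exp_add]
  ring_nf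

theorem uniformLaplace_ifpt_ratio (a S u : ℝ) :
    (uniformLaplace a S u + uniformLaplace a S (-u) * exp (-2 * a * u)) /
        (exp (-S * u) + exp ((S - 2 * a) * u)) =
      tanh ((S - a) * u) / ((S - a) * u) := by
  rw [uniformLaplace_add_uniformLaplace_neg_mul_exp, exp_neg_mul_add_exp_sub_two_mul,
    tanh_eq_sinh_div_cosh, div_right_comm, mul_div_mul_left _ _ (exp_ne_zero _),
    mul_div_mul_left _ _ (two_ne_zero' ℝ)]

theorem uniform_density_ifpt_general (a S θ : ℝ)
    (ghat : ℝ → ℝ)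
    (hghat : ghat = fun u => (Real.exp (-a * u) - Real.exp (-S * u)) / ((S - a) * u)) :
    (ghat (Real.sqrt (2 * θ)) + ghat (-Real.sqrt (2 * θ)) * Real.exp (-2 * a * Real.sqrt (2 * θ))) /
      (Real.exp (-S * Real.sqrt (2 * θ)) + Real.exp ((S - 2 * a) * Real.sqrt (2 * θ))) =
    Real.tanh ((S - a) * Real.sqrt (2 * θ)) / ((S - a) * Real.sqrt (2 * θ)) := by
  subst hghat
  exact uniformLaplace_ifpt_ratio a S _

theorem uniform_density_ifpt (a S θ : ℝ) (ha : a < S) (hθ : 0 < θ)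
    (ghat : ℝ → ℝ)
    (hghat : ghat = fun u => (Real.exp (-a * u) - Real.exp (-S * u)) / ((S - a) * u)) :
    (ghat (Real.sqrt (2 * θ)) + ghat (-Real.sqrt (2 * θ)) * Real.exp (-2 * a * Real.sqrt (2 * θ))) /
      (Real.exp (-S * Real.sqrt (2 * θ)) + Real.exp ((S - 2 * a) * Real.sqrt (2 * θ))) =
    Real.tanh ((S - a) * Real.sqrt (2 * θ)) / ((S - a) * Real.sqrt (2 * θ)) :=
  uniform_density_ifpt_general a S θ ghat hghat
end
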